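/- Let x be a solution of the delayed consensus inequality on [t₀,∞) such that Λ* := lim_{t→∞} Λ(t) is finite, where Λ(t) = max_{i∈[1:n]} sup_{s∈[t−h̄,t]} x_i(s). Then the largest component converges to Λ*: max_{i∈[1:n]} x_i(t) → Λ* as t → ∞. -/

import Mathlib

open MeasureTheory Set Filter intervalIntegral

noncomputable section

/-- Standing assumptions on the weight functions: measurable,
`0 ≤ a i j t ≤ ā` on `[0,∞)` and `a i i ≡ 0`. -/
def GoodWeights (n : ℕ) (abar : ℝ) (a : Fin n → Fin n → ℝ → ℝ) : Prop :=
  (∀ i j, Measurable (a i j)) ∧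
  (∀ i j, ∀ t : ℝ, 0 ≤ t → 0 ≤ a i j t ∧ a i j t ≤ abar) ∧
  (∀ i, ∀ t : ℝ, 0 ≤ t → a i i t = 0)

/-- Standing assumptions on the delay functions: measurable,
`0 ≤ h i j t ≤ h̄` on `[0,∞)` and `h i i ≡ 0`. -/
def GoodDelays (n : ℕ) (hbar : ℝ) (h : Fin n → Fin n → ℝ → ℝ) : Prop :=
  (∀ i j, Measurable (h i j)) ∧
  (∀ i j, ∀ t : ℝ, 0 ≤ t → 0 ≤ h i j t ∧ h i j t ≤ hbar) ∧
  (∀ i, ∀ t : ℝ, 0 ≤ t → h i i t = 0)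

/-- `x` is bounded on every compact subset of `[t₀ - h̄, ∞)`. -/
def LocBounded (n : ℕ) (t0 hbar : ℝ) (x : ℝ → Fin n → ℝ) : Prop :=
  ∀ T : ℝ, ∃ C : ℝ, ∀ i : Fin n, ∀ s ∈ Icc (t0 - hbar) T, |x s i| ≤ C

/-- `x` is a solution of the delayed consensus differential *inequality* on `[t₀,∞)`:
it is locally bounded on `[t₀ - h̄, ∞)`, absolutely continuous on `[t₀,∞)` with a.e.
derivative `D` (encoded via the integral representation with locally integrable `D`),
and `D` satisfies the consensus inequality almost everywhere on `[t₀,∞)`. -/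
def IsSolIneq (n : ℕ) (a h : Fin n → Fin n → ℝ → ℝ) (hbar t0 : ℝ)
    (x D : ℝ → Fin n → ℝ) : Prop :=
  LocBounded n t0 hbar x ∧
  (∀ i : Fin n, ∀ T : ℝ, IntegrableOn (fun s => D s i) (Icc t0 T)) ∧
  (∀ i : Fin n, ∀ t : ℝ, t0 ≤ t → x t i = x t0 i + ∫ s in t0..t, D s i) ∧
  (∀ᵐ t : ℝ ∂volume, t0 ≤ t → ∀ i : Fin n,
    D t i ≤ ∑ j : Fin n, a i j t * (x (t - h i j t) j - x t i))

/-- `x` is a solution of the delayed consensus *equation* on `[t₀,∞)`. -/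
def IsSolEq (n : ℕ) (a h : Fin n → Fin n → ℝ → ℝ) (hbar t0 : ℝ)
    (x D : ℝ → Fin n → ℝ) : Prop :=
  LocBounded n t0 hbar x ∧
  (∀ i : Fin n, ∀ T : ℝ, IntegrableOn (fun s => D s i) (Icc t0 T)) ∧
  (∀ i : Fin n, ∀ t : ℝ, t0 ≤ t → x t i = x t0 i + ∫ s in t0..t, D s i) ∧
  (∀ᵐ t : ℝ ∂volume, t0 ≤ t → ∀ i : Fin n,
    D t i = ∑ j : Fin n, a i j t * (x (t - h i j t) j - x t i))

/-- `Λ(t) = max_i sup_{s ∈ [t-h̄, t]} x_i(s)`. -/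
def Lam (n : ℕ) (hbar : ℝ) (x : ℝ → Fin n → ℝ) (t : ℝ) : ℝ :=
  ⨆ i : Fin n, sSup ((fun s => x s i) '' Icc (t - hbar) t)

/-- `λ(t) = min_i inf_{s ∈ [t-h̄, t]} x_i(s)`. -/
def lam (n : ℕ) (hbar : ℝ) (x : ℝ → Fin n → ℝ) (t : ℝ) : ℝ :=
  ⨅ i : Fin n, sInf ((fun s => x s i) '' Icc (t - hbar) t)

/-- Non-instantaneous type-symmetry of the weight matrix with sequence `tp` and
constant `K` (Definition 1). -/
def NonInstTypeSymm (n : ℕ) (a : Fin n → Fin n → ℝ → ℝ) (tp : ℕ → ℝ) (K : ℝ) : Prop :=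
  tp 0 = 0 ∧ StrictMono tp ∧ Tendsto tp atTop atTop ∧ 1 ≤ K ∧
  ∀ p : ℕ, ∀ i j : Fin n,
    K⁻¹ * ∫ t in tp p..tp (p + 1), a j i t ≤ (∫ t in tp p..tp (p + 1), a i j t) ∧
    (∫ t in tp p..tp (p + 1), a i j t) ≤ K * ∫ t in tp p..tp (p + 1), a j i t

/-- The persistent graph `G_∞`, whose arcs are the pairs `(j,i)` with
`∫_0^∞ a_{ij} = ∞` (i.e. `a i j` is not integrable on `[0,∞)`), is connected:
the symmetric reflexive-transitive closure of the arc relation relates any two nodes. -/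
def PersGraphConnected (n : ℕ) (a : Fin n → Fin n → ℝ → ℝ) : Prop :=
  ∀ u v : Fin n, Relation.ReflTransGen
    (fun p q => ¬ IntegrableOn (a q p) (Ici 0) ∨ ¬ IntegrableOn (a p q) (Ici 0)) u v

/-- The weight matrix is repeatedly strongly connected with sequence `tp` and
constant `ε` (Definition 2): on each `[t_p, t_{p+1}]`, the graph whose arcs `(j,i)`
satisfy `∫_{t_p}^{t_{p+1}} a_{ij} ≥ ε` is strongly connected. -/
def RepeatedlyStronglyConnected (n : ℕ) (a : Fin n → Fin n → ℝ → ℝ)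
    (tp : ℕ → ℝ) (ε : ℝ) : Prop :=
  tp 0 = 0 ∧ StrictMono tp ∧ Tendsto tp atTop atTop ∧ 0 < ε ∧
  ∀ p : ℕ, ∀ u v : Fin n, Relation.ReflTransGen
    (fun i j => ε ≤ ∫ t in tp p..tp (p + 1), a j i t) u v

/-- The quantity `M = sup_{i,j,p} ∫_{t_p}^{t_{p+1}} a_{ij}` is finite, bounded by `M`. -/
def MBound (n : ℕ) (a : Fin n → Fin n → ℝ → ℝ) (tp : ℕ → ℝ) (M : ℝ) : Prop :=
  ∀ p : ℕ, ∀ i j : Fin n, (∫ t in tp p..tp (p + 1), a i j t) ≤ M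

end

/-!
A component `xᵢ` whose delayed inputs stay below a ceiling `P` satisfies `ẋᵢ ≤ n ā (P - xᵢ)`, so
over a time step `T` with `n ā T ≤ 1/2` its distance to `P` shrinks at most by half. Taking `P`
the largest value on a window shows that `Λ(t)` bounds `x` on all of `[t - h̄, ∞)`. Taking
`P = Λ(t)` and starting from `maxᵢ xᵢ(t)` gives, for a fixed `k` with `h̄ ≤ k T`,
`Λ(t) - maxᵢ xᵢ(t) ≤ 2ᵏ (Λ(t) - Λ(t + h̄))`, and the right-hand side tends to `0`.
-/

theorem ContinuousOn.exists_last_le {α β : Type*} [ConditionallyCompleteLinearOrder α]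
    [TopologicalSpace α] [OrderTopology α] [LinearOrder β] [TopologicalSpace β]
    [ClosedIicTopology β] {f : α → β} {r s : α} {c : β} (hf : ContinuousOn f (Icc r s))
    (hrs : r ≤ s) (hr : f r ≤ c) : ∃ τ ∈ Icc r s, f τ ≤ c ∧ ∀ σ ∈ Ioc τ s, c < f σ := by
  set K := Icc r s ∩ f ⁻¹' Iic c
  have hK : IsCompact K :=
    isCompact_Icc.of_isClosed_subset (hf.preimage_isClosed_of_isClosed isClosed_Icc isClosed_Iic)
      inter_subset_left
  have hτ : sSup K ∈ K := hK.sSup_mem ⟨r, ⟨le_rfl, hrs⟩, hr⟩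
  refine ⟨sSup K, hτ.1, hτ.2, fun σ hσ => not_le.1 fun hfσ => ?_⟩
  exact hσ.1.not_ge (le_csSup hK.bddAbove ⟨⟨hτ.1.1.trans hσ.1.le, hσ.2⟩, hfσ⟩)

variable {n : ℕ}

/-- `Lam n hbar x t` is definitionally `windowSup x (t - hbar) t`. -/
noncomputable def windowSup (x : ℝ → Fin n → ℝ) (u v : ℝ) : ℝ :=
  ⨆ j, sSup ((fun s => x s j) '' Icc u v)

section windowSup

variable {x : ℝ → Fin n → ℝ} {u v s z : ℝ}

theorem le_windowSup (hx : ∀ j, BddAbove ((fun s => x s j) '' Icc u v)) (hs : s ∈ Icc u v)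
    (i : Fin n) : x s i ≤ windowSup x u v :=
  (le_csSup (hx i) (mem_image_of_mem _ hs)).trans
    (le_ciSup (f := fun j => sSup ((fun s => x s j) '' Icc u v)) (finite_range _).bddAbove i)

theorem windowSup_le [Nonempty (Fin n)] (huv : u ≤ v) (hz : ∀ j, ∀ s ∈ Icc u v, x s j ≤ z) :
    windowSup x u v ≤ z :=
  ciSup_le fun j => csSup_le ((nonempty_Icc.2 huv).image _) <| by
    rintro _ ⟨s, hs, rfl⟩
    exact hz j s hs

end windowSup

variable {a h : Fin n → Fin n → ℝ → ℝ} {abar hbar t0 : ℝ} {x D : ℝ → Fin n → ℝ}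

theorem LocBounded.bddAbove_image (hx : LocBounded n t0 hbar x) {u : ℝ} (hu : t0 - hbar ≤ u)
    (v : ℝ) (j : Fin n) : BddAbove ((fun s => x s j) '' Icc u v) := by
  obtain ⟨C, hC⟩ := hx v
  refine ⟨C, ?_⟩
  rintro _ ⟨s, hs, rfl⟩
  exact (abs_le.1 (hC j s ⟨hu.trans hs.1, hs.2⟩)).2

theorem LocBounded.le_Lam (hx : LocBounded n t0 hbar x) {t s : ℝ} (ht : t0 ≤ t)
    (hs : s ∈ Icc (t - hbar) t) (i : Fin n) : x s i ≤ Lam n hbar x t :=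
  le_windowSup (hx.bddAbove_image (by linarith) t) hs i

theorem LocBounded.iSup_le_Lam [Nonempty (Fin n)] (hx : LocBounded n t0 hbar x) (hhbar : 0 ≤ hbar)
    {t : ℝ} (ht : t0 ≤ t) : ⨆ i, x t i ≤ Lam n hbar x t :=
  ciSup_le (hx.le_Lam ht ⟨by linarith, le_rfl⟩)

namespace IsSolIneq

variable (hx : IsSolIneq n a h hbar t0 x D)
include hx

theorem intervalIntegrable {α β : ℝ} (hα : t0 ≤ α) (hβ : t0 ≤ β) (i : Fin n) :
    IntervalIntegrable (fun s => D s i) volume α β :=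
  ((hx.2.1 i (max α β)).mono_set <|
    uIcc_subset_Icc ⟨hα, le_max_left _ _⟩ ⟨hβ, le_max_right _ _⟩).intervalIntegrable

theorem eq_add_integral {α β : ℝ} (hα : t0 ≤ α) (hβ : t0 ≤ β) (i : Fin n) :
    x β i = x α i + ∫ s in α..β, D s i := by
  rw [hx.2.2.1 i β hβ, hx.2.2.1 i α hα, add_assoc,
    integral_add_adjacent_intervals (hx.intervalIntegrable le_rfl hα i)
      (hx.intervalIntegrable hα hβ i)]

theorem continuousOn (S : ℝ) (i : Fin n) : ContinuousOn (fun s => x s i) (Icc t0 S) := by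
  rcases le_total t0 S with hS | hS
  · have hprim := continuousOn_primitive_interval (μ := volume) (a := t0) (b := S)
      (f := fun s => D s i) ((hx.2.1 i S).mono_set (uIcc_subset_Icc ⟨le_rfl, hS⟩ ⟨hS, le_rfl⟩))
    rw [uIcc_of_le hS] at hprim
    exact (continuousOn_const.add hprim).congr fun s hs => hx.2.2.1 i s hs.1
  · exact (subsingleton_Icc_of_ge hS).continuousOn _

theorem ae_deriv_le (ha : GoodWeights n abar a) (hh : GoodDelays n hbar h) (ht0 : 0 ≤ t0) :
    ∀ᵐ σ, t0 ≤ σ → ∀ i P, (∀ j, ∀ s ∈ Icc (σ - hbar) σ, x s j ≤ P) →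
      D σ i ≤ n * abar * (P - x σ i) := by
  filter_upwards [hx.2.2.2] with σ hD hσ i P hP
  have hσ0 : 0 ≤ σ := ht0.trans hσ
  have hdelay : ∀ j, x (σ - h i j σ) j ≤ P := fun j => hP j _
    ⟨by linarith [(hh.2.1 i j σ hσ0).2], by linarith [(hh.2.1 i j σ hσ0).1]⟩
  have hxP : 0 ≤ P - x σ i := by simpa [hh.2.2 i σ hσ0] using hdelay i
  calc D σ i ≤ ∑ j, a i j σ * (x (σ - h i j σ) j - x σ i) := hD hσ i
    _ ≤ ∑ _j : Fin n, abar * (P - x σ i) := Finset.sum_le_sum fun j _ => by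
        obtain ⟨ha0, haB⟩ := ha.2.1 i j σ hσ0
        calc a i j σ * (x (σ - h i j σ) j - x σ i) ≤ a i j σ * (P - x σ i) := by
              gcongr; exact hdelay j
          _ ≤ abar * (P - x σ i) := by gcongr
    _ = n * abar * (P - x σ i) := by simp [mul_assoc]

variable (ha : GoodWeights n abar a) (hh : GoodDelays n hbar h) (ht0 : 0 ≤ t0) (habar : 0 ≤ abar)
include ha hh ht0 habar

/-- While `xᵢ` stays above `P - e` it grows at rate at most `n ā e`, so integrate from the last
time `τ` at which `xᵢ ≤ P - e`. -/
theorem le_sub_add_of_le_sub {r s e P : ℝ} {i : Fin n} (hr : t0 ≤ r) (hrs : r ≤ s) (he : 0 ≤ e)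
    (hxr : x r i ≤ P - e) (hP : ∀ j, ∀ σ ∈ Icc (r - hbar) s, x σ j ≤ P) :
    x s i ≤ P - e + n * abar * e * (s - r) := by
  obtain ⟨τ, ⟨hrτ, hτs⟩, hxτ, hlast⟩ :=
    ((hx.continuousOn s i).mono (Icc_subset_Icc_left hr)).exists_last_le hrs hxr
  have hD : ∀ᵐ σ, σ ∈ Ioc τ s → D σ i ≤ n * abar * e := by
    filter_upwards [hx.ae_deriv_le ha hh ht0] with σ hσ hστ
    calc D σ i ≤ n * abar * (P - x σ i) := hσ (by linarith [hστ.1]) i P fun j u hu =>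
          hP j u ⟨by linarith [hu.1, hστ.1], hu.2.trans hστ.2⟩
      _ ≤ n * abar * e := by gcongr; linarith [hlast σ hστ]
  have hint : ∫ σ in τ..s, D σ i ≤ ∫ _σ in τ..s, n * abar * e := by
    rw [integral_of_le hτs, integral_of_le hτs]
    exact setIntegral_mono_ae_restrict (hx.intervalIntegrable (hr.trans hrτ) (hr.trans hrs) i).1
      intervalIntegrable_const.1 ((ae_restrict_iff' measurableSet_Ioc).2 hD)
  calc x s i = x τ i + ∫ σ in τ..s, D σ i := hx.eq_add_integral (hr.trans hrτ) (hr.trans hrs) i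
    _ ≤ P - e + n * abar * e * (s - τ) := by
        rw [intervalIntegral.integral_const, smul_eq_mul] at hint; linarith
    _ ≤ P - e + n * abar * e * (s - r) := by gcongr

theorem le_sub_div_pow {T t1 S β P : ℝ} {i : Fin n} (hT : n * abar * T ≤ 1 / 2) (ht1 : t0 ≤ t1)
    (hβP : β ≤ P) (hinit : x t1 i ≤ β) (hP : ∀ j, ∀ σ ∈ Icc (t1 - hbar) S, x σ j ≤ P) (k : ℕ) :
    ∀ s ∈ Icc t1 S, s ≤ t1 + k * T → x s i ≤ P - (P - β) / 2 ^ k := by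
  induction k with
  | zero =>
    intro s hs hsk
    obtain rfl : s = t1 := le_antisymm (by simpa using hsk) hs.1
    simpa using hinit
  | succ k ih =>
    intro s hs hsk
    have he : 0 ≤ (P - β) / 2 ^ k := div_nonneg (sub_nonneg.2 hβP) (by positivity)
    rw [pow_succ, ← div_div]
    rcases le_or_gt s (t1 + k * T) with hsk' | hsk'
    · linarith [ih s hs hsk']
    · push_cast at hsk
      have hr : t1 ≤ t1 + k * T := by
        have : 0 < T := by linarith
        simpa using mul_nonneg k.cast_nonneg this.le
      have hstep := hx.le_sub_add_of_le_sub ha hh ht0 habar (ht1.trans hr) hsk'.le he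
        (ih _ ⟨hr, hsk'.le.trans hs.2⟩ le_rfl)
        fun j σ hσ => hP j σ ⟨by linarith [hσ.1], hσ.2.trans hs.2⟩
      have hgap : n * abar * (s - (t1 + k * T)) ≤ 1 / 2 :=
        (mul_le_mul_of_nonneg_left (by linarith) (by positivity)).trans hT
      nlinarith

/-- If the largest value `P` on `[t - h̄, s]` exceeded `Λ(t)`, repeated halving from `t` would
push every value there strictly below `P`. -/
theorem le_Lam (hhbar : 0 ≤ hbar) {t s : ℝ} (ht : t0 ≤ t) (hs : t - hbar ≤ s) (i : Fin n) :
    x s i ≤ Lam n hbar x t := by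
  rcases le_or_gt s t with hst | hts
  · exact hx.1.le_Lam ht ⟨hs, hst⟩ i
  have : Nonempty (Fin n) := ⟨i⟩
  set M := Lam n hbar x t
  set P := windowSup x (t - hbar) s
  have hxP : ∀ j, ∀ σ ∈ Icc (t - hbar) s, x σ j ≤ P := fun j σ hσ =>
    le_windowSup (hx.1.bddAbove_image (by linarith) s) hσ j
  refine (hxP i s ⟨hs, le_rfl⟩).trans (not_lt.1 fun hMP => ?_)
  have hxM : ∀ j, ∀ σ ∈ Icc (t - hbar) t, x σ j ≤ M := fun j σ hσ => hx.1.le_Lam ht hσ j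
  obtain ⟨T, hT0, hT⟩ := exists_pos_mul_lt one_half_pos (n * abar)
  obtain ⟨k, hk⟩ := exists_nat_ge ((s - t) / T)
  rw [div_le_iff₀ hT0] at hk
  have hdrop : (P - M) / 2 ^ k ≤ P - M := div_le_self (by linarith) (one_le_pow₀ one_le_two)
  have hPle : P ≤ P - (P - M) / 2 ^ k := windowSup_le (by linarith) fun j σ hσ => by
    rcases le_or_gt σ t with hσt | hσt
    · linarith [hxM j σ ⟨hσ.1, hσt⟩]
    · exact hx.le_sub_div_pow ha hh ht0 habar hT.le ht hMP.le (hxM j t ⟨by linarith, le_rfl⟩)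
        hxP k σ ⟨hσt.le, hσ.2⟩ (by linarith [hσ.2])
  have : 0 < (P - M) / 2 ^ k := div_pos (by linarith) (by positivity)
  linarith

theorem exists_Lam_sub_iSup_le [Nonempty (Fin n)] (hhbar : 0 ≤ hbar) :
    ∃ k : ℕ, ∀ t, t0 ≤ t →
      Lam n hbar x t - ⨆ i, x t i ≤ 2 ^ k * (Lam n hbar x t - Lam n hbar x (t + hbar)) := by
  obtain ⟨T, hT0, hT⟩ := exists_pos_mul_lt one_half_pos (n * abar)
  obtain ⟨k, hk⟩ := exists_nat_ge (hbar / T)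
  rw [div_le_iff₀ hT0] at hk
  refine ⟨k, fun t ht => ?_⟩
  set M := Lam n hbar x t
  set β := ⨆ i, x t i
  have hxβ : ∀ i, x t i ≤ β := le_ciSup (finite_range _).bddAbove
  have hend : Lam n hbar x (t + hbar) ≤ M - (M - β) / 2 ^ k :=
    windowSup_le (by linarith) fun i σ hσ =>
      hx.le_sub_div_pow ha hh ht0 habar hT.le ht (hx.1.iSup_le_Lam hhbar ht) (hxβ i)
        (fun j τ hτ => hx.le_Lam ha hh ht0 habar hhbar ht hτ.1 j) k σ
        ⟨by linarith [hσ.1], hσ.2⟩ (by linarith [hσ.2])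
  rw [← div_le_iff₀' (by positivity)]
  linarith

end IsSolIneq

theorem stmt10 (n : ℕ) (hn : 1 ≤ n) (abar hbar : ℝ) (habar : 0 ≤ abar) (hhbar : 0 ≤ hbar)
    (a h : Fin n → Fin n → ℝ → ℝ)
    (ha : GoodWeights n abar a) (hh : GoodDelays n hbar h)
    (t0 : ℝ) (ht0 : 0 ≤ t0) (x D : ℝ → Fin n → ℝ)
    (hx : IsSolIneq n a h hbar t0 x D)
    (L : ℝ) (hL : Tendsto (Lam n hbar x) atTop (nhds L)) :
    Tendsto (fun t => ⨆ i : Fin n, x t i) atTop (nhds L) := by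
  have : Nonempty (Fin n) := ⟨⟨0, hn⟩⟩
  obtain ⟨k, hk⟩ := hx.exists_Lam_sub_iSup_le ha hh ht0 habar hhbar
  have hdecay : Tendsto (fun t => 2 ^ k * (Lam n hbar x t - Lam n hbar x (t + hbar))) atTop
      (nhds 0) := by
    simpa using (hL.sub (hL.comp (tendsto_atTop_add_const_right _ hbar tendsto_id))).const_mul
      ((2 : ℝ) ^ k)
  have hgap : Tendsto (fun t => Lam n hbar x t - ⨆ i, x t i) atTop (nhds 0) := by
    refine tendsto_of_tendsto_of_tendsto_of_le_of_le' tendsto_const_nhds hdecay ?_ ?_ <;>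
      filter_upwards [eventually_ge_atTop t0] with t ht
    · exact sub_nonneg.2 (hx.1.iSup_le_Lam hhbar ht)
    · exact hk t ht
  simpa using hL.sub hgap
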